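/- arXiv:1505.04262 — 11 statements merged into one kernel-verified Lean document; each statement's English description precedes it below -/
import Mathlib

section
/- Let A be an invertible real n×n matrix, b, c ∈ ℝⁿ, h, L, ω ∈ ℝ, and φ : ℝ → ℝ a function bounded by M ≥ 0 (|φ(θ)| ≤ M for all θ). If |ω| > |L| · |h − cᵀA⁻¹b| · M, then the PLL model has no equilibrium: there is no (x₀, θ₀) with A x₀ + b φ(θ₀) = 0 and ω − L cᵀx₀ − L h φ(θ₀) = 0. -/
open Matrix

/-- If the phase-detector characteristic `φ` is bounded by `M` and the frequency
deviation is too large, `|ω| > |L| · |h − cᵀA⁻¹b| · M`, then the PLL model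
`ẋ = A x + b φ(θ)`, `θ̇ = ω − L cᵀx − L h φ(θ)` has no equilibrium. -/
theorem pll_no_equilibrium_of_large_deviation {n : ℕ}
    (A : Matrix (Fin n) (Fin n) ℝ) (hA : IsUnit A.det)
    (b c : Fin n → ℝ) (h L ω : ℝ) (φ : ℝ → ℝ) (M : ℝ) (hM : 0 ≤ M)
    (hφ : ∀ θ : ℝ, |φ θ| ≤ M)
    (hω : |ω| > |L| * |h - c ⬝ᵥ (A⁻¹ *ᵥ b)| * M) :
    ¬ ∃ (x₀ : Fin n → ℝ) (θ₀ : ℝ),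
        A *ᵥ x₀ + φ θ₀ • b = 0 ∧ ω - L * (c ⬝ᵥ x₀) - L * h * φ θ₀ = 0 := by
  rintro ⟨x₀, θ₀, h1, h2⟩
  have hx : x₀ = -(φ θ₀ • (A⁻¹ *ᵥ b)) := by
    have hAx : A *ᵥ x₀ = -(φ θ₀ • b) := by
      have := h1
      rw [add_eq_zero_iff_eq_neg] at this
      exact this
    have : A⁻¹ *ᵥ (A *ᵥ x₀) = A⁻¹ *ᵥ (-(φ θ₀ • b)) := by rw [hAx]
    rwa [mulVec_mulVec, Matrix.nonsing_inv_mul A hA, one_mulVec,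
      Matrix.mulVec_neg, Matrix.mulVec_smul] at this
  have hc : c ⬝ᵥ x₀ = -(φ θ₀ * (c ⬝ᵥ (A⁻¹ *ᵥ b))) := by
    rw [hx, dotProduct_neg, dotProduct_smul]
    ring_nf
  have hωeq : ω = L * (h - c ⬝ᵥ (A⁻¹ *ᵥ b)) * φ θ₀ := by
    have := h2
    rw [hc] at this
    linarith [this]
  have : |ω| ≤ |L| * |h - c ⬝ᵥ (A⁻¹ *ᵥ b)| * M := by
    rw [hωeq, abs_mul, abs_mul]
    exact mul_le_mul_of_nonneg_left (hφ θ₀) (by positivity)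
  linarith
end

section
/- For a real number γ, every complex root of the polynomial X³ + X² + (2 + 4γ)·X + 8γ has negative real part if and only if 0 < γ < 1/2. -/
open Complex in
lemma cubic_expand (x y γ : ℝ) :
    ((x:ℂ) + (y:ℂ) * I) ^ 3 + ((x:ℂ) + (y:ℂ) * I) ^ 2
      + (2 + 4 * (γ:ℂ)) * ((x:ℂ) + (y:ℂ) * I) + 8 * (γ:ℂ)
    = ((x^3 - 3*x*y^2 + x^2 - y^2 + (2+4*γ)*x + 8*γ : ℝ) : ℂ)
      + ((3*x^2*y - y^3 + 2*x*y + (2+4*γ)*y : ℝ) : ℂ) * I := by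
  push_cast
  linear_combination (3*(x:ℂ)*(y:ℂ)^2 + (y:ℂ)^2 + (y:ℂ)^3 * I) * Complex.I_sq

/-- Routh–Hurwitz for the cubic `X³ + X² + (2 + 4γ)X + 8γ`: all complex roots
have negative real part iff `0 < γ < 1/2`. -/
theorem cubic_stable_iff (γ : ℝ) :
    (∀ z : ℂ, z ^ 3 + z ^ 2 + (2 + 4 * (γ : ℂ)) * z + 8 * (γ : ℂ) = 0 →
      z.re < 0) ↔ (0 < γ ∧ γ < 1 / 2) := by
  constructor
  · intro h
    by_contra hc
    push_neg at hc
    rcases le_or_gt γ 0 with hγ | hγ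
    · -- find a real root `x ≥ 0`
      set f : ℝ → ℝ := fun x => x^3 + x^2 + (2+4*γ)*x + 8*γ with hf
      have hcont : ContinuousOn f (Set.Icc 0 (1 - 12*γ)) := by
        apply Continuous.continuousOn; continuity
      have hb : (0:ℝ) ≤ 1 - 12*γ := by linarith
      have hmem : (0:ℝ) ∈ Set.Icc (f 0) (f (1 - 12*γ)) := by
        constructor
        · simp only [hf]; nlinarith
        · simp only [hf]; nlinarith [sq_nonneg γ, sq_nonneg (1 - 12*γ)]
      obtain ⟨x, hx, hfx⟩ := intermediate_value_Icc hb hcont hmem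
      have hroot : (x:ℂ) ^ 3 + (x:ℂ) ^ 2 + (2 + 4 * (γ:ℂ)) * x + 8 * γ = 0 := by
        have : ((f x : ℝ) : ℂ) = 0 := by rw [hfx]; norm_num
        simp only [hf] at this
        push_cast at this
        linear_combination this
      have := h x hroot
      simp at this
      linarith [hx.1]
    · have h12 : 1/2 ≤ γ := hc hγ
      -- find `x ∈ [0, γ]` a root of the auxiliary cubic q
      set q : ℝ → ℝ := fun x => 8*x^3 + 8*x^2 + (6+8*γ)*x + 2 - 4*γ with hq
      have hcont : ContinuousOn q (Set.Icc 0 γ) := by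
        apply Continuous.continuousOn; continuity
      have hmem : (0:ℝ) ∈ Set.Icc (q 0) (q γ) := by
        constructor
        · simp only [hq]; nlinarith
        · simp only [hq]; nlinarith [pow_pos hγ 3, sq_nonneg γ]
      obtain ⟨x, hx, hqx⟩ := intermediate_value_Icc hγ.le hcont hmem
      simp only [hq] at hqx
      have hx0 : 0 ≤ x := hx.1
      set s : ℝ := 3*x^2 + 2*x + 2 + 4*γ with hs
      have hspos : 0 < s := by nlinarith [sq_nonneg x]
      set y : ℝ := Real.sqrt s with hy
      have hy2 : y^2 = s := Real.sq_sqrt hspos.le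
      have hroot : ((x:ℂ) + (y:ℂ) * Complex.I) ^ 3 + ((x:ℂ) + (y:ℂ) * Complex.I) ^ 2
          + (2 + 4 * (γ:ℂ)) * ((x:ℂ) + (y:ℂ) * Complex.I) + 8 * γ = 0 := by
        rw [cubic_expand]
        have hy2' : y^2 = 3*x^2 + 2*x + 2 + 4*γ := by rw [hy2]
        have hA : x^3 - 3*x*y^2 + x^2 - y^2 + (2+4*γ)*x + 8*γ = 0 := by
          linear_combination -hqx - (3*x+1) * hy2'
        have hB : 3*x^2*y - y^3 + 2*x*y + (2+4*γ)*y = 0 := by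
          linear_combination (-y) * hy2'
        rw [hA, hB]
        simp
      have := h _ hroot
      simp at this
      linarith
  · rintro ⟨h0, h2⟩ z hz
    set x := z.re with hxdef
    set y := z.im with hydef
    have hzxy : z = (x:ℂ) + (y:ℂ) * Complex.I := (Complex.re_add_im z).symm
    rw [hzxy, cubic_expand] at hz
    have hA : x^3 - 3*x*y^2 + x^2 - y^2 + (2+4*γ)*x + 8*γ = 0 := by
      simpa [← Complex.ofReal_pow] using congrArg Complex.re hz
    have hB : 3*x^2*y - y^3 + 2*x*y + (2+4*γ)*y = 0 := by
      simpa [← Complex.ofReal_pow] using congrArg Complex.im hz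
    by_contra hx
    push_neg at hx
    rcases eq_or_ne y 0 with hy | hy
    · rw [hy] at hA
      nlinarith [pow_nonneg hx 3, sq_nonneg x, mul_nonneg (by linarith : (0:ℝ) ≤ 2+4*γ) hx]
    · have hbr : y * (3*x^2 + 2*x + 2 + 4*γ - y^2) = 0 := by linear_combination hB
      have hy2 : y^2 = 3*x^2 + 2*x + 2 + 4*γ := by
        rcases mul_eq_zero.mp hbr with h | h
        · exact absurd h hy
        · linarith
      have hqx : 8*x^3 + 8*x^2 + (6+8*γ)*x + 2 - 4*γ = 0 := by
        linear_combination -hA - (3*x+1) * hy2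
      nlinarith [pow_nonneg hx 3, sq_nonneg x, mul_nonneg (by linarith : (0:ℝ) ≤ 6+8*γ) hx]
end

section
/- The set { r ∈ ℝ | 0 ≤ r and there exists θ ∈ ℝ such that sin θ = r/4 and every complex root of the polynomial X³ + X² + (2 + 4cos θ)·X + 8cos θ has negative real part } is equal to the open interval (2√3, 4). -/
/-- Routh–Hurwitz for the cubic `z³ + z² + (2+4c)z + 8c`: all complex roots have
negative real part iff `0 < c < 1/2`. -/
theorem pll_stable_iff (c : ℝ) :
    (∀ z : ℂ, z ^ 3 + z ^ 2 + (2 + 4 * (c : ℂ)) * z + 8 * (c : ℂ) = 0 → z.re < 0) ↔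
      (0 < c ∧ c < 1/2) := by
  have cast_root : ∀ x : ℝ, x^3 + x^2 + (2+4*c)*x + 8*c = 0 →
      (x:ℂ) ^ 3 + (x:ℂ) ^ 2 + (2 + 4 * (c : ℂ)) * x + 8 * (c : ℂ) = 0 := by
    intro x hx
    have : ((x^3 + x^2 + (2+4*c)*x + 8*c : ℝ) : ℂ) = 0 := by
      exact_mod_cast congrArg (fun t : ℝ => (t:ℂ)) hx
    push_cast at this
    linear_combination this
  constructor
  · intro h
    have hc0 : 0 < c := by
      by_contra hc
      push_neg at hc
      set f : ℝ → ℝ := fun x => x^3 + x^2 + (2+4*c)*x + 8*c with hf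
      have hcont : ContinuousOn f (Set.Icc 0 (3 - 12*c)) := by fun_prop
      have hft : 0 ≤ f (3 - 12*c) := by
        simp only [hf]
        nlinarith [sq_nonneg c, sq_nonneg (c+1)]
      have hf0 : f 0 ≤ 0 := by simp [hf]; linarith
      obtain ⟨x, hx, hfx⟩ := intermediate_value_Icc (by linarith : (0:ℝ) ≤ 3 - 12*c) hcont ⟨hf0, hft⟩
      have := h x (cast_root x hfx)
      simp at this
      linarith [hx.1]
    refine ⟨hc0, ?_⟩
    set f : ℝ → ℝ := fun x => x^3 + x^2 + (2+4*c)*x + 8*c with hf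
    have hcont : ContinuousOn f (Set.Icc (-(4 + 12*c)) 0) := by fun_prop
    have hft : f (-(4 + 12*c)) ≤ 0 := by
      simp only [hf]
      nlinarith [sq_nonneg c, sq_nonneg (c+1)]
    have hf0 : 0 ≤ f 0 := by simp [hf]; linarith
    obtain ⟨r, hr, hfr⟩ := intermediate_value_Icc (by linarith : -(4 + 12*c) ≤ 0) hcont ⟨hft, hf0⟩
    have hroot : r^3 + r^2 + (2+4*c)*r + 8*c = 0 := hfr
    have hrneg : r < 0 := by
      have := h r (cast_root r hroot)
      simpa using this
    set b : ℝ := 1 + r with hb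
    set m : ℝ := 2 + 4*c + r + r^2 with hm
    have hfact : ∀ z : ℂ, z^2 + b*z + m = 0 →
        z ^ 3 + z ^ 2 + (2 + 4 * (c : ℂ)) * z + 8 * (c : ℂ) = 0 := by
      intro z hq
      have hrC : (r:ℂ)^3 + (r:ℂ)^2 + (2+4*(c:ℂ))*r + 8*c = 0 := cast_root r hroot
      push_cast [hb, hm] at hq ⊢
      linear_combination (z - (r:ℂ)) * hq + hrC
    have hbpos : 0 < b := by
      rcases le_or_gt 0 (b^2 - 4*m) with hD | hD
      · set s := Real.sqrt (b^2 - 4*m) with hs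
        have hs2 : s^2 = b^2 - 4*m := Real.sq_sqrt hD
        have hsnn : 0 ≤ s := Real.sqrt_nonneg _
        have hq : ((-b + s)/2 : ℝ)^2 + b*((-b + s)/2) + m = 0 := by nlinarith [hs2]
        have hqC : (((-b + s)/2 : ℝ):ℂ)^2 + (b:ℂ)*(((-b + s)/2 : ℝ):ℂ) + (m:ℂ) = 0 := by
          exact_mod_cast congrArg (fun t : ℝ => (t:ℂ)) hq
        have := h (((-b + s)/2 : ℝ):ℂ) (hfact _ (by linear_combination hqC))
        simp at this
        linarith
      · set s := Real.sqrt (4*m - b^2) with hs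
        have hs2 : s^2 = 4*m - b^2 := Real.sq_sqrt (by linarith)
        set z : ℂ := (-(b:ℂ) + (s:ℂ)*Complex.I)/2 with hz
        have hq : z^2 + (b:ℂ)*z + (m:ℂ) = 0 := by
          have hs2C : (s:ℂ)^2 = 4*(m:ℂ) - (b:ℂ)^2 := by
            exact_mod_cast congrArg (fun t : ℝ => (t:ℂ)) hs2
          rw [hz]
          linear_combination ((s:ℂ)^2/4) * Complex.I_sq - (1/4) * hs2C
        have := h z (hfact _ (by linear_combination hq))
        rw [hz] at this
        simp [Complex.div_re, Complex.add_re, Complex.normSq] at this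
        nlinarith [this]
    have key : 2 - 4*c = b * (m - r) := by
      simp only [hb, hm]
      linear_combination -hroot
    nlinarith [hbpos, hrneg, hc0, key]
  · rintro ⟨hc0, hc1⟩ z hz
    obtain ⟨x, y⟩ := z
    have h1 : (Complex.mk x y ^ 3 + Complex.mk x y ^ 2 + (2 + 4 * (c : ℂ)) * Complex.mk x y + 8 * (c : ℂ)).re = 0 := by rw [hz]; simp
    have h2 : (Complex.mk x y ^ 3 + Complex.mk x y ^ 2 + (2 + 4 * (c : ℂ)) * Complex.mk x y + 8 * (c : ℂ)).im = 0 := by rw [hz]; simp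
    simp [pow_succ, Complex.add_re, Complex.add_im, Complex.mul_re, Complex.mul_im,
      Complex.ofReal_re, Complex.ofReal_im] at h1 h2
    show x < 0
    by_contra hx
    push_neg at hx
    rcases eq_or_ne y 0 with hy | hy
    · subst hy
      simp at h1
      nlinarith [sq_nonneg x, mul_nonneg (mul_nonneg hx hx) hx]
    · have heq : 3*x^2 - y^2 + 2*x + 2 + 4*c = 0 := by
        have hy2 : y * (3*x^2 - y^2 + 2*x + 2 + 4*c) = 0 := by linarith [h2]
        rcases mul_eq_zero.mp hy2 with h | h
        · exact absurd h hy
        · exact h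
      nlinarith [h1, heq, mul_nonneg (mul_nonneg hx hx) hx, sq_nonneg x, sq_nonneg y,
        mul_nonneg hx (sq_nonneg y)]

/-- The hold-in set of the classical PLL with `φ(θ) = (1/2)sin θ`, `L = 8` and
`H(s) = (1 + 0.5s)/(1 + 0.5s + 0.5s²)` is the open interval `(2√3, 4)`;
in particular it does not contain the frequency deviation `0`. -/
theorem holdin_set_eq_Ioo :
    { r : ℝ | 0 ≤ r ∧ ∃ θ : ℝ, Real.sin θ = r / 4 ∧
        (∀ z : ℂ, z ^ 3 + z ^ 2 + (2 + 4 * (Real.cos θ : ℂ)) * z +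
            8 * (Real.cos θ : ℂ) = 0 → z.re < 0) } =
      Set.Ioo (2 * Real.sqrt 3) 4 := by
  have h3 : (Real.sqrt 3)^2 = 3 := Real.sq_sqrt (by norm_num)
  have h3nn : 0 ≤ Real.sqrt 3 := Real.sqrt_nonneg 3
  ext r
  simp only [Set.mem_setOf_eq, Set.mem_Ioo]
  constructor
  · rintro ⟨hr, θ, hsin, hstab⟩
    obtain ⟨hc0, hc1⟩ := (pll_stable_iff (Real.cos θ)).mp hstab
    have hpy : Real.sin θ ^ 2 + Real.cos θ ^ 2 = 1 := Real.sin_sq_add_cos_sq θ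
    rw [hsin] at hpy
    constructor
    · nlinarith [hpy, hc0, hc1, hr, h3, h3nn]
    · nlinarith [hpy, hc0, hc1, hr]
  · rintro ⟨h1, h2⟩
    have hr0 : 0 ≤ r := le_trans (by positivity) h1.le
    have hr12 : 12 < r^2 := by nlinarith
    refine ⟨hr0, Real.arcsin (r/4), Real.sin_arcsin (by linarith) (by linarith), ?_⟩
    rw [pll_stable_iff]
    rw [Real.cos_arcsin]
    constructor
    · apply Real.sqrt_pos.mpr
      nlinarith
    · rw [show (1:ℝ)/2 = Real.sqrt (1/4) by
        rw [show (1:ℝ)/4 = (1/2)^2 by norm_num, Real.sqrt_sq (by norm_num)]]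
      apply Real.sqrt_lt_sqrt (by nlinarith)
      nlinarith
end

section
/- For a real number K, every complex root of the polynomial 2X⁴ + 2X³ + (2 + K/2)·X² + (1 + K/4)·X + K has negative real part if and only if K ∈ (0, 12 − 8√2) ∪ (12 + 8√2, ∞). -/
open Polynomial in
private lemma cubic_real_root (p q r : ℝ) : ∃ x : ℝ, 2*x^3+p*x^2+q*x+r = 0 := by
  have hc : Continuous fun x : ℝ => 2*x^3+p*x^2+q*x+r := by continuity
  set M : ℝ := 1 + |p| + |q| + |r| with hM
  have hM1 : 1 ≤ M := by
    have := abs_nonneg p; have := abs_nonneg q; have := abs_nonneg r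
    simp [hM]; linarith
  have hMM : 0 ≤ M^2 - M := by nlinarith
  have h1 : 0 ≤ |q| * (M^2 - M) := mul_nonneg (abs_nonneg q) hMM
  have h2 : 0 ≤ |r| * (M^2 - 1) := mul_nonneg (abs_nonneg r) (by nlinarith)
  have hup : 0 ≤ 2*M^3+p*M^2+q*M+r := by
    nlinarith [neg_abs_le p, neg_abs_le q, neg_abs_le r, sq_nonneg M,
      mul_nonneg (abs_nonneg p) (sq_nonneg M)]
  have hlo : 2*(-M)^3+p*(-M)^2+q*(-M)+r ≤ 0 := by
    nlinarith [le_abs_self p, neg_abs_le q, le_abs_self r, sq_nonneg M,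
      mul_nonneg (abs_nonneg p) (sq_nonneg M)]
  obtain ⟨x, _, hx⟩ := intermediate_value_Icc (by linarith : -M ≤ M) hc.continuousOn
    (Set.mem_Icc.mpr ⟨hlo, hup⟩)
  exact ⟨x, hx⟩


private lemma quartic_has_root (K : ℝ) :
    ∃ z : ℂ, 2 * z ^ 4 + 2 * z ^ 3 + (2 + (K : ℂ) / 2) * z ^ 2 +
        (1 + (K : ℂ) / 4) * z + (K : ℂ) = 0 := by
  classical
  set P : Polynomial ℂ := Polynomial.C 2 * Polynomial.X ^ 4 + Polynomial.C 2 * Polynomial.X ^ 3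
    + Polynomial.C (2 + (K:ℂ)/2) * Polynomial.X ^ 2 + Polynomial.C (1 + (K:ℂ)/4) * Polynomial.X
    + Polynomial.C (K:ℂ) with hP
  have h4 : P.natDegree = 4 := by
    rw [hP]; compute_degree!
  have hdeg : 0 < P.degree := Polynomial.natDegree_pos_iff_degree_pos.mp (by omega)
  obtain ⟨z, hz⟩ := Complex.exists_root (f := P) hdeg
  refine ⟨z, ?_⟩
  have := hz
  simp only [hP, Polynomial.IsRoot, Polynomial.eval_add, Polynomial.eval_mul,
    Polynomial.eval_pow, Polynomial.eval_C, Polynomial.eval_X] at this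
  linear_combination this




private lemma factor_helper (K s q : ℝ) (w₁ w₂ : ℂ)
    (hs : w₁ + w₂ = (s:ℂ)) (hq : w₁ * w₂ = (q:ℂ))
    (h1 : 2 * w₁ ^ 4 + 2 * w₁ ^ 3 + (2 + (K : ℂ) / 2) * w₁ ^ 2 +
        (1 + (K : ℂ) / 4) * w₁ + (K : ℂ) = 0)
    (h2 : 2*w₂^3 + (2+2*w₁)*w₂^2 + (2+(K:ℂ)/2+2*w₁+2*w₁^2)*w₂
          + (1+(K:ℂ)/4+(2+(K:ℂ)/2)*w₁+2*w₁^2+2*w₁^3) = 0) :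
    ∀ z : ℂ, 2 * z ^ 4 + 2 * z ^ 3 + (2 + (K : ℂ) / 2) * z ^ 2 +
        (1 + (K : ℂ) / 4) * z + (K : ℂ)
      = 2*(z^2+((-s : ℝ):ℂ)*z+((q : ℝ):ℂ))*(z^2+((1+s : ℝ):ℂ)*z+((1+K/4+s+s^2-q : ℝ):ℂ)) := by
  intro z
  push_cast
  rw [← hs, ← hq]
  linear_combination (z - w₁) * h2 + h1

private lemma quad_factor (K : ℝ) :
    ∃ b c d e : ℝ, ∀ z : ℂ,
      2 * z ^ 4 + 2 * z ^ 3 + (2 + (K : ℂ) / 2) * z ^ 2 +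
        (1 + (K : ℂ) / 4) * z + (K : ℂ)
      = 2*(z^2+((b : ℝ):ℂ)*z+((c : ℝ):ℂ))*(z^2+((d : ℝ):ℂ)*z+((e : ℝ):ℂ)) := by
  obtain ⟨a, ha⟩ := quartic_has_root K
  by_cases him : a.im = 0
  · -- real root case
    set x := a.re with hx
    have hax : a = (x:ℂ) := by
      apply Complex.ext <;> simp [him, hx]
    rw [hax] at ha
    obtain ⟨t, ht⟩ := cubic_real_root (2+2*x) (2+K/2+2*x+2*x^2)
      (1+K/4+(2+K/2)*x+2*x^2+2*x^3)
    have h2 : 2*((t:ℝ):ℂ)^3 + (2+2*((x:ℝ):ℂ))*((t:ℝ):ℂ)^2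
        + (2+(K:ℂ)/2+2*((x:ℝ):ℂ)+2*((x:ℝ):ℂ)^2)*((t:ℝ):ℂ)
        + (1+(K:ℂ)/4+(2+(K:ℂ)/2)*((x:ℝ):ℂ)+2*((x:ℝ):ℂ)^2+2*((x:ℝ):ℂ)^3) = 0 := by
      exact_mod_cast congrArg (fun r : ℝ => (r:ℂ)) ht
    exact ⟨-(x+t), x*t, 1+(x+t), 1+K/4+(x+t)+(x+t)^2-x*t,
      factor_helper K (x+t) (x*t) (x:ℂ) (t:ℂ) (by push_cast; ring) (by push_cast; ring) ha h2⟩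
  · -- nonreal root: pair with conjugate
    have hconj : 2 * ((starRingEnd ℂ) a) ^ 4 + 2 * ((starRingEnd ℂ) a) ^ 3
        + (2 + (K : ℂ) / 2) * ((starRingEnd ℂ) a) ^ 2
        + (1 + (K : ℂ) / 4) * ((starRingEnd ℂ) a) + (K : ℂ) = 0 := by
      have h := congrArg (starRingEnd ℂ) ha
      simp only [map_add, map_mul, map_pow, map_div₀, map_one, map_ofNat, map_zero,
        Complex.conj_ofReal] at h
      linear_combination h
    have hsub : ((starRingEnd ℂ) a - a) *
        (2*((starRingEnd ℂ) a)^3 + (2+2*a)*((starRingEnd ℂ) a)^2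
          + (2+(K:ℂ)/2+2*a+2*a^2)*((starRingEnd ℂ) a)
          + (1+(K:ℂ)/4+(2+(K:ℂ)/2)*a+2*a^2+2*a^3)) = 0 := by
      linear_combination hconj - ha
    have hne : (starRingEnd ℂ) a - a ≠ 0 := by
      intro h
      apply him
      have h' := congrArg Complex.im h
      simp [Complex.sub_im, Complex.conj_im] at h'
      linarith
    have hC := (mul_eq_zero.mp hsub).resolve_left hne
    have hs : a + (starRingEnd ℂ) a = ((2*a.re : ℝ) : ℂ) := Complex.add_conj a
    have hq : a * (starRingEnd ℂ) a = ((a.re^2+a.im^2 : ℝ) : ℂ) := by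
      rw [Complex.mul_conj]
      push_cast [Complex.normSq_apply]
      ring
    exact ⟨-(2*a.re), a.re^2+a.im^2, 1+2*a.re, 1+K/4+2*a.re+(2*a.re)^2-(a.re^2+a.im^2),
      factor_helper K (2*a.re) (a.re^2+a.im^2) a ((starRingEnd ℂ) a) hs hq ha hC⟩


private lemma coeff_eqs (K b c d e : ℝ)
    (hfac : ∀ z : ℂ, 2 * z ^ 4 + 2 * z ^ 3 + (2 + (K : ℂ) / 2) * z ^ 2 +
        (1 + (K : ℂ) / 4) * z + (K : ℂ)
      = 2*(z^2+((b : ℝ):ℂ)*z+((c : ℝ):ℂ))*(z^2+((d : ℝ):ℂ)*z+((e : ℝ):ℂ))) :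
    b + d = 1 ∧ c + e + b*d = 1 + K/4 ∧ b*e + c*d = (4+K)/8 ∧ c*e = K/2 := by
  have h1 := hfac 1
  have hm := hfac (-1)
  have h2 := hfac 2
  have h0 := hfac 0
  refine ⟨?_, ?_, ?_, ?_⟩
  · have h : ((b+d : ℝ) : ℂ) = ((1:ℝ) : ℂ) := by
      push_cast
      linear_combination (1/4 : ℂ)*h1 + (1/12 : ℂ)*hm - (1/12 : ℂ)*h2 - (1/4 : ℂ)*h0
    exact_mod_cast h
  · have h : ((c+e+b*d : ℝ) : ℂ) = ((1+K/4 : ℝ) : ℂ) := by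
      push_cast
      linear_combination (-1/4 : ℂ)*h1 + (-1/4 : ℂ)*hm + (1/2 : ℂ)*h0
    exact_mod_cast h
  · have h : ((b*e+c*d : ℝ) : ℂ) = (((4+K)/8 : ℝ) : ℂ) := by
      push_cast
      linear_combination (-1/2 : ℂ)*h1 + (1/6 : ℂ)*hm + (1/12 : ℂ)*h2 + (1/4 : ℂ)*h0
    exact_mod_cast h
  · have h : ((c*e : ℝ) : ℂ) = ((K/2 : ℝ) : ℂ) := by
      push_cast
      linear_combination (-1/2 : ℂ)*h0
    exact_mod_cast h

private lemma quad_root_neg (b c : ℝ) (hb : 0 < b) (hc : 0 < c) (z : ℂ)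
    (hz : z^2 + (b:ℂ)*z + (c:ℂ) = 0) : z.re < 0 := by
  have hz' : z*z + (b:ℂ)*z + (c:ℂ) = 0 := by linear_combination hz
  rw [Complex.ext_iff] at hz'
  obtain ⟨e1, e2⟩ := hz'
  simp only [Complex.add_re, Complex.add_im, Complex.mul_re, Complex.mul_im,
    Complex.ofReal_re, Complex.ofReal_im, Complex.zero_re, Complex.zero_im] at e1 e2
  by_contra h
  push_neg at h
  have hb2 : 0 < 2*z.re + b := by linarith
  have h3 : z.im * (2*z.re + b) = 0 := by linarith [e2]
  have him : z.im = 0 := by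
    rcases mul_eq_zero.mp h3 with h' | h'
    · exact h'
    · linarith
  nlinarith [mul_nonneg hb.le h, sq_nonneg z.re, him]

private lemma quad_coeff_pos (b c : ℝ)
    (H : ∀ z : ℂ, z^2 + (b:ℂ)*z + (c:ℂ) = 0 → z.re < 0) : 0 < b ∧ 0 < c := by
  rcases le_or_gt (4*c) (b^2) with h | h
  · -- real roots
    set D := Real.sqrt (b^2 - 4*c) with hD
    have hD2 : D^2 = b^2 - 4*c := Real.sq_sqrt (by linarith)
    have hr1 : (((-b+D)/2 : ℝ) : ℂ)^2 + (b:ℂ)*(((-b+D)/2 : ℝ) : ℂ) + (c:ℂ) = 0 := by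
      have : ((-b+D)/2)^2 + b*((-b+D)/2) + c = 0 := by nlinarith [hD2]
      exact_mod_cast congrArg (fun r : ℝ => (r:ℂ)) (by linarith [this] : ((-b+D)/2)^2 + b*((-b+D)/2) + c = 0)
    have hr2 : (((-b-D)/2 : ℝ) : ℂ)^2 + (b:ℂ)*(((-b-D)/2 : ℝ) : ℂ) + (c:ℂ) = 0 := by
      have : ((-b-D)/2)^2 + b*((-b-D)/2) + c = 0 := by nlinarith [hD2]
      exact_mod_cast congrArg (fun r : ℝ => (r:ℂ)) this
    have n1 := H _ hr1
    have n2 := H _ hr2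
    simp only [Complex.ofReal_re] at n1 n2
    constructor
    · nlinarith [Real.sqrt_nonneg (b^2-4*c)]
    · nlinarith [hD2]
  · -- complex roots
    set T := Real.sqrt (4*c - b^2) with hT
    have hT2 : T^2 = 4*c - b^2 := Real.sq_sqrt (by linarith)
    have hT2c : ((T:ℂ))^2 = 4*(c:ℂ) - (b:ℂ)^2 := by exact_mod_cast congrArg (fun r : ℝ => (r:ℂ)) hT2
    have hroot : (((-b/2 : ℝ):ℂ) + ((T/2 : ℝ):ℂ)*Complex.I)^2
        + (b:ℂ)*(((-b/2 : ℝ):ℂ) + ((T/2 : ℝ):ℂ)*Complex.I) + (c:ℂ) = 0 := by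
      push_cast
      linear_combination (((T:ℂ)^2)/4) * Complex.I_sq + (-1/4 : ℂ) * hT2c
    have n1 := H _ hroot
    have : (-b/2 : ℝ) < 0 := by
      simpa [Complex.add_re, Complex.mul_re, Complex.I_re, Complex.I_im] using n1
    constructor
    · linarith
    · nlinarith






private lemma key_id (K b c d e : ℝ) (E1 : b + d = 1) (E2 : c + e + b*d = 1 + K/4)
    (E3 : b*e + c*d = (4+K)/8) (E4 : c*e = K/2) :
    64*(b*d)*((c-e)^2+(4+K)/8) = K^2 - 24*K + 16 := by
  linear_combination (64*(-(b*d)*(4+K)/8 + (c+e+b*d)*(b*e+c*d) - (b+d+1)*(c*e)))*E1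
    + (64*(b*e+c*d))*E2 + (64*(-(b*d)*(b+d) + 1 + K/4 - (b*e+c*d) - (4+K)/8))*E3
    + (-64)*E4

/-- Routh–Hurwitz for the quartic `2X⁴ + 2X³ + (2 + K/2)X² + (1 + K/4)X + K`:
all complex roots have negative real part iff
`K ∈ (0, 12 − 8√2) ∪ (12 + 8√2, ∞)`. -/
theorem quartic_stable_iff (K : ℝ) :
    (∀ z : ℂ, 2 * z ^ 4 + 2 * z ^ 3 + (2 + (K : ℂ) / 2) * z ^ 2 +
        (1 + (K : ℂ) / 4) * z + (K : ℂ) = 0 → z.re < 0) ↔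
      K ∈ Set.Ioo 0 (12 - 8 * Real.sqrt 2) ∪ Set.Ioi (12 + 8 * Real.sqrt 2) := by
  have hr2 : (Real.sqrt 2)^2 = 2 := Real.sq_sqrt (by norm_num)
  have hr2n : 0 ≤ Real.sqrt 2 := Real.sqrt_nonneg 2
  obtain ⟨b, c, d, e, hfac⟩ := quad_factor K
  obtain ⟨E1, E2, E3, E4⟩ := coeff_eqs K b c d e hfac
  constructor
  · intro H
    have H1 : ∀ z : ℂ, z^2 + (b:ℂ)*z + (c:ℂ) = 0 → z.re < 0 := fun z h => by
      refine H z ?_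
      rw [hfac z, h]; ring
    have H2 : ∀ z : ℂ, z^2 + (d:ℂ)*z + (e:ℂ) = 0 → z.re < 0 := fun z h => by
      refine H z ?_
      rw [hfac z, h]; ring
    obtain ⟨hb, hc⟩ := quad_coeff_pos b c H1
    obtain ⟨hd, he⟩ := quad_coeff_pos d e H2
    have hK : 0 < K := by nlinarith [mul_pos hc he]
    have hkey := key_id K b c d e E1 E2 E3 E4
    have hΔ : 0 < K^2 - 24*K + 16 := by
      nlinarith [mul_pos hb hd, sq_nonneg (c-e)]
    by_cases hcase : K < 12
    · left
      refine Set.mem_Ioo.mpr ⟨hK, ?_⟩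
      by_contra hcon
      push_neg at hcon
      nlinarith [mul_nonneg (by linarith : (0:ℝ) ≤ 8*Real.sqrt 2 - (12 - K))
        (by linarith : (0:ℝ) ≤ 8*Real.sqrt 2 + (12 - K))]
    · right
      refine Set.mem_Ioi.mpr ?_
      push_neg at hcase
      by_contra hcon
      push_neg at hcon
      nlinarith [mul_nonneg (by linarith : (0:ℝ) ≤ 8*Real.sqrt 2 - (K - 12))
        (by linarith : (0:ℝ) ≤ 8*Real.sqrt 2 + (K - 12))]
  · intro hmem
    have hKΔ : 0 < K ∧ 0 < K^2 - 24*K + 16 := by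
      rcases hmem with h | h
      · obtain ⟨h0, h1⟩ := Set.mem_Ioo.mp h
        refine ⟨h0, ?_⟩
        nlinarith [mul_pos (by linarith : (0:ℝ) < 12 - 8*Real.sqrt 2 - K + 8*Real.sqrt 2 - K + K)
          (by linarith : (0:ℝ) < 12 + 8*Real.sqrt 2 - K)]
      · have h' := Set.mem_Ioi.mp h
        refine ⟨by nlinarith, ?_⟩
        nlinarith [mul_pos (by linarith : (0:ℝ) < K - 12 - 8*Real.sqrt 2)
          (by linarith : (0:ℝ) < K - 12 + 8*Real.sqrt 2)]
    obtain ⟨hK, hΔ⟩ := hKΔ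
    have hkey := key_id K b c d e E1 E2 E3 E4
    have hP : 0 < (c-e)^2 + (4+K)/8 := by positivity
    have hbd : 0 < b*d := by
      by_contra hbd
      push_neg at hbd
      nlinarith [mul_nonneg (neg_nonneg.mpr hbd) hP.le]
    have hb : 0 < b := by nlinarith
    have hd : 0 < d := by nlinarith
    have hs : 0 < c + e := by
      by_contra hcon
      push_neg at hcon
      nlinarith [sq_nonneg (b - d)]
    have hc : 0 < c := by nlinarith
    have he : 0 < e := by nlinarith
    intro z hz
    rw [hfac z] at hz
    rcases mul_eq_zero.mp hz with h | h
    · rcases mul_eq_zero.mp h with h' | h'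
      · norm_num at h'
      · exact quad_root_neg b c hb hc z h'
    · exact quad_root_neg d e hd he z h
end

section
/- The set { r ∈ ℝ | 0 ≤ r and there exists θ ∈ ℝ such that sin θ = r/40 and 40·cos θ ∈ (0, 12 − 8√2) ∪ (12 + 8√2, ∞) } is equal to [0, √(1600 − (12 + 8√2)²)) ∪ (√(1600 − (12 − 8√2)²), 40), i.e. a union of two disjoint nonempty intervals (approximately [0, 32.5) ∪ (39.9942, 40)). -/
set_option maxHeartbeats 1000000


/-- The hold-in set of the classical PLL with `φ(θ) = (1/2)sin θ`, `L = 80` and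
`H(s) = (1 + 0.25s + 0.5s²)/(1 + 2s + 2s² + 2s³)` equals
`[0, √(1600 − (12 + 8√2)²)) ∪ (√(1600 − (12 − 8√2)²), 40)`,
a union of two disjoint nonempty intervals (≈ `[0, 32.5) ∪ (39.9942, 40)`). -/
theorem holdin_set_union_of_intervals :
    ({ r : ℝ | 0 ≤ r ∧ ∃ θ : ℝ, Real.sin θ = r / 40 ∧
        40 * Real.cos θ ∈
          Set.Ioo 0 (12 - 8 * Real.sqrt 2) ∪ Set.Ioi (12 + 8 * Real.sqrt 2) } =
      Set.Ico 0 (Real.sqrt (1600 - (12 + 8 * Real.sqrt 2) ^ 2)) ∪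
        Set.Ioo (Real.sqrt (1600 - (12 - 8 * Real.sqrt 2) ^ 2)) 40) ∧
    0 < Real.sqrt (1600 - (12 + 8 * Real.sqrt 2) ^ 2) ∧
    Real.sqrt (1600 - (12 + 8 * Real.sqrt 2) ^ 2) <
      Real.sqrt (1600 - (12 - 8 * Real.sqrt 2) ^ 2) ∧
    Real.sqrt (1600 - (12 - 8 * Real.sqrt 2) ^ 2) < 40 := by
  have hs2 : Real.sqrt 2 ^ 2 = 2 := Real.sq_sqrt (by norm_num)
  have hs2n : (0:ℝ) ≤ Real.sqrt 2 := Real.sqrt_nonneg 2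
  have hs2lt : Real.sqrt 2 < 1.5 := by nlinarith
  have hs2gt : 1 < Real.sqrt 2 := by nlinarith
  set a : ℝ := 12 - 8 * Real.sqrt 2 with ha
  set b : ℝ := 12 + 8 * Real.sqrt 2 with hb
  have ha0 : 0 < a := by rw [ha]; nlinarith
  have hb0 : 0 < b := by rw [hb]; nlinarith
  have hbsq : b ^ 2 < 1600 := by rw [hb]; nlinarith
  have hab : a < b := by rw [ha, hb]; nlinarith
  set A : ℝ := Real.sqrt (1600 - b ^ 2) with hAdef
  set B : ℝ := Real.sqrt (1600 - a ^ 2) with hBdef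
  have hA2 : A ^ 2 = 1600 - b ^ 2 := Real.sq_sqrt (by nlinarith)
  have hB2 : B ^ 2 = 1600 - a ^ 2 := Real.sq_sqrt (by nlinarith)
  have hA0 : 0 ≤ A := Real.sqrt_nonneg _
  have hB0 : 0 ≤ B := Real.sqrt_nonneg _
  have hApos : 0 < A := Real.sqrt_pos.mpr (by nlinarith)
  have hAB : A < B := Real.sqrt_lt_sqrt (by nlinarith) (by nlinarith)
  have hB40 : B < 40 := by nlinarith
  refine ⟨?_, hApos, hAB, hB40⟩
  ext r
  simp only [Set.mem_setOf_eq, Set.mem_union, Set.mem_Ico, Set.mem_Ioo, Set.mem_Ioi]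
  constructor
  · rintro ⟨hr0, θ, hsin, hcos⟩
    have hpyth : Real.sin θ ^ 2 + Real.cos θ ^ 2 = 1 := Real.sin_sq_add_cos_sq θ
    have hreq : r ^ 2 + (40 * Real.cos θ) ^ 2 = 1600 := by
      have : (r / 40) ^ 2 + Real.cos θ ^ 2 = 1 := by rw [← hsin]; exact hpyth
      nlinarith
    rcases hcos with ⟨h1, h2⟩ | h1
    · right
      have hcsq : (40 * Real.cos θ) ^ 2 < a ^ 2 := by nlinarith [sq_nonneg (40 * Real.cos θ - a)]
      constructor
      · have h3 : B ^ 2 < r ^ 2 := by nlinarith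
        nlinarith [sq_nonneg (r - B)]
      · nlinarith [sq_nonneg (40 * Real.cos θ), sq_nonneg (r - 40)]
    · left
      refine ⟨hr0, ?_⟩
      have hcsq : b ^ 2 < (40 * Real.cos θ) ^ 2 := by nlinarith [sq_nonneg (40 * Real.cos θ - b)]
      have h3 : r ^ 2 < A ^ 2 := by nlinarith
      nlinarith [sq_nonneg (r - A)]
  · intro h
    have hr0' : 0 ≤ r := by
      rcases h with ⟨h1, _⟩ | ⟨h1, _⟩
      · exact h1
      · linarith
    have hr40 : r < 40 := by
      rcases h with ⟨_, h2⟩ | ⟨_, h2⟩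
      · nlinarith
      · exact h2
    have hm1 : (-1:ℝ) ≤ r / 40 := by nlinarith
    have hm2 : r / 40 ≤ 1 := by nlinarith
    refine ⟨hr0', Real.arcsin (r / 40), Real.sin_arcsin hm1 hm2, ?_⟩
    have hkey : 40 * Real.cos (Real.arcsin (r / 40)) = Real.sqrt (1600 - r ^ 2) := by
      rw [Real.cos_arcsin,
        show (1600:ℝ) - r ^ 2 = 40 ^ 2 * (1 - (r / 40) ^ 2) by ring,
        Real.sqrt_mul (by norm_num), Real.sqrt_sq (by norm_num)]
    rw [hkey]
    have hc2 : Real.sqrt (1600 - r ^ 2) ^ 2 = 1600 - r ^ 2 :=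
      Real.sq_sqrt (by nlinarith)
    have hcn : 0 ≤ Real.sqrt (1600 - r ^ 2) := Real.sqrt_nonneg _
    rcases h with ⟨h1, h2⟩ | ⟨h1, h2⟩
    · right
      have hrA : r ^ 2 < A ^ 2 := by nlinarith [sq_nonneg (r - A)]
      nlinarith [sq_nonneg (Real.sqrt (1600 - r ^ 2) - b)]
    · left
      have hrB : B ^ 2 < r ^ 2 := by nlinarith [sq_nonneg (r - B)]
      exact ⟨Real.sqrt_pos.mpr (by nlinarith [sq_nonneg (r - 40)]),
        by nlinarith [sq_nonneg (Real.sqrt (1600 - r ^ 2) - a)]⟩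
end

section
/- For every real L > 24 + 16√2, the set { r ∈ ℝ | 0 ≤ r and there exists θ ∈ ℝ such that sin θ = 2r/L and (L/2)·cos θ ∈ (0, 12 − 8√2) ∪ (12 + 8√2, ∞) } is equal to [0, √((L/2)² − (12 + 8√2)²)) ∪ (√((L/2)² − (12 − 8√2)²), L/2), which is a union of two disjoint nonempty intervals separated by a nonempty gap. -/
set_option maxHeartbeats 1000000


/-- For every VCO gain `L > 24 + 16√2`, the hold-in set of the classical PLL with
`φ(θ) = (1/2)sin θ` and `H(s) = (1 + 0.25s + 0.5s²)/(1 + 2s + 2s² + 2s³)` equals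
`[0, √((L/2)² − (12 + 8√2)²)) ∪ (√((L/2)² − (12 − 8√2)²), L/2)`,
a union of two disjoint nonempty intervals separated by a nonempty gap. -/
theorem holdin_set_disjoint_union_of_large_gain (L : ℝ)
    (hL : L > 24 + 16 * Real.sqrt 2) :
    ({ r : ℝ | 0 ≤ r ∧ ∃ θ : ℝ, Real.sin θ = 2 * r / L ∧
        L / 2 * Real.cos θ ∈
          Set.Ioo 0 (12 - 8 * Real.sqrt 2) ∪ Set.Ioi (12 + 8 * Real.sqrt 2) } =
      Set.Ico 0 (Real.sqrt ((L / 2) ^ 2 - (12 + 8 * Real.sqrt 2) ^ 2)) ∪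
        Set.Ioo (Real.sqrt ((L / 2) ^ 2 - (12 - 8 * Real.sqrt 2) ^ 2)) (L / 2)) ∧
    0 < Real.sqrt ((L / 2) ^ 2 - (12 + 8 * Real.sqrt 2) ^ 2) ∧
    Real.sqrt ((L / 2) ^ 2 - (12 + 8 * Real.sqrt 2) ^ 2) <
      Real.sqrt ((L / 2) ^ 2 - (12 - 8 * Real.sqrt 2) ^ 2) ∧
    Real.sqrt ((L / 2) ^ 2 - (12 - 8 * Real.sqrt 2) ^ 2) < L / 2 := by
  have s2 : Real.sqrt 2 ^ 2 = 2 := Real.sq_sqrt (by norm_num)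
  have s2nn : (0:ℝ) ≤ Real.sqrt 2 := Real.sqrt_nonneg 2
  have s2lt : Real.sqrt 2 < 1.5 := by nlinarith
  set a : ℝ := 12 - 8 * Real.sqrt 2 with ha_def
  set b : ℝ := 12 + 8 * Real.sqrt 2 with hb_def
  set M : ℝ := L / 2 with hM_def
  have ha : 0 < a := by rw [ha_def]; nlinarith
  have hab : a < b := by rw [ha_def, hb_def]; nlinarith
  have hbM : b < M := by rw [hb_def, hM_def]; linarith
  have hb : 0 < b := lt_trans ha hab
  have hM : 0 < M := lt_trans hb hbM
  have hL0 : L ≠ 0 := by rw [hM_def] at hM; intro h; rw [h] at hM; norm_num at hM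
  have hMb : 0 < M ^ 2 - b ^ 2 := by nlinarith
  have hba : M ^ 2 - b ^ 2 < M ^ 2 - a ^ 2 := by nlinarith
  have hMa : M ^ 2 - a ^ 2 < M ^ 2 := by nlinarith
  have sbpos : 0 < Real.sqrt (M ^ 2 - b ^ 2) := Real.sqrt_pos.mpr hMb
  have sapos : 0 < Real.sqrt (M ^ 2 - a ^ 2) := Real.sqrt_pos.mpr (lt_trans hMb hba)
  refine ⟨?_, sbpos, Real.sqrt_lt_sqrt hMb.le hba, (Real.sqrt_lt' hM).mpr hMa⟩
  ext r
  simp only [Set.mem_setOf_eq, Set.mem_union, Set.mem_Ico, Set.mem_Ioo, Set.mem_Ioi]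
  constructor
  · rintro ⟨hr0, θ, hsin, hcos⟩
    have hMs : M * Real.sin θ = r := by rw [hsin, hM_def]; field_simp
    have hpy := Real.sin_sq_add_cos_sq θ
    have key : (M * Real.cos θ) ^ 2 = M ^ 2 - r ^ 2 := by
      rw [← hMs]; linear_combination M ^ 2 * hpy
    rcases hcos with ⟨h1, h2⟩ | h1
    · -- 0 < M cos θ < a
      have hr2 : M ^ 2 - a ^ 2 < r ^ 2 := by nlinarith
      have hrpos : 0 < r := by
        rcases hr0.eq_or_lt with h | h
        · exfalso; nlinarith
        · exact h
      right
      exact ⟨(Real.sqrt_lt' hrpos).mpr hr2, by nlinarith⟩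
    · -- b < M cos θ
      have hr2 : r ^ 2 < M ^ 2 - b ^ 2 := by nlinarith
      exact Or.inl ⟨hr0, (Real.lt_sqrt hr0).mpr hr2⟩
  · intro h
    have hr0 : 0 ≤ r := by
      rcases h with ⟨h0, _⟩ | ⟨h0, _⟩
      · exact h0
      · exact le_of_lt (lt_of_le_of_lt sapos.le h0)
    have hrM : r < M := by
      rcases h with ⟨_, h1⟩ | ⟨_, h1⟩
      · exact lt_of_lt_of_le h1 ((Real.sqrt_le_sqrt (by nlinarith : M ^ 2 - b ^ 2 ≤ M ^ 2)).trans_eq (Real.sqrt_sq hM.le))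
      · exact h1
    have hs1 : 2 * r / L = r / M := by rw [hM_def]; field_simp
    refine ⟨hr0, Real.arcsin (2 * r / L), Real.sin_arcsin ?_ ?_, ?_⟩
    · rw [hs1]; linarith [div_nonneg hr0 hM.le]
    · rw [hs1, div_le_one hM]; exact hrM.le
    · rw [Real.cos_arcsin, hs1]
      have hMc : M * Real.sqrt (1 - (r / M) ^ 2) = Real.sqrt (M ^ 2 - r ^ 2) := by
        rw [show M ^ 2 - r ^ 2 = M ^ 2 * (1 - (r / M) ^ 2) by field_simp,
          Real.sqrt_mul (sq_nonneg M), Real.sqrt_sq hM.le]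
      rw [hMc]
      rcases h with ⟨_, h1⟩ | ⟨h1, _⟩
      · -- r < √(M² - b²), so √(M² - r²) > b
        right
        have hr2 : r ^ 2 < M ^ 2 - b ^ 2 := (Real.lt_sqrt hr0).mp h1
        exact (Real.lt_sqrt hb.le).mpr (by nlinarith)
      · -- √(M² - a²) < r, so 0 < √(M² - r²) < a
        left
        have hrpos : 0 < r := lt_of_le_of_lt sapos.le h1
        have hr2 : M ^ 2 - a ^ 2 < r ^ 2 := (Real.sqrt_lt' hrpos).mp h1
        exact ⟨Real.sqrt_pos.mpr (by nlinarith), (Real.sqrt_lt' ha).mpr (by nlinarith)⟩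
end

section
/- Let α, β, L, ω ∈ ℝ with L ≠ 0, and define V : ℝ² → ℝ by V(x, θ) = (1/2)(x − ω/L)² + (2β/L)·sin²(θ/2). If differentiable functions x, θ : ℝ → ℝ satisfy ẋ(t) = β·sin θ(t) and θ̇(t) = ω − L·x(t) − L·α·sin θ(t) for all t, then for all t the function t ↦ V(x(t), θ(t)) is differentiable with derivative d/dt V(x(t), θ(t)) = −α·β·sin²(θ(t)). Moreover, if β/L ≥ 0 then V(x, θ) ≥ 0 for all (x, θ), and if α·β ≥ 0 then d/dt V(x(t), θ(t)) ≤ 0 for all t. -/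
/-- The Lyapunov function `V(x, θ) = (1/2)(x − ω/L)² + (2β/L) sin²(θ/2)` for the
classical PLL with perfect-integrator filter `H(s) = (β + αs)/s`. -/
noncomputable def pllLyapunov (β L ω : ℝ) (x θ : ℝ) : ℝ :=
  1 / 2 * (x - ω / L) ^ 2 + 2 * β / L * Real.sin (θ / 2) ^ 2

/-! Since `sin²(θ/2) = (1 - cos θ)/2`, the phase term of `V` has derivative `(β/L) sin θ · θ̇`;
on a solution the `ω` and `L x` terms of `θ̇` then cancel against those of `(x − ω/L) ẋ`,
leaving `−αβ sin²θ`. -/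

open Real

theorem hasDerivAt_sin_half_sq_comp {f : ℝ → ℝ} {f' t : ℝ} (hf : HasDerivAt f f' t) :
    HasDerivAt (fun s => sin (f s / 2) ^ 2) (sin (f t) * f' / 2) t := by
  have sin_sq_half : ∀ y : ℝ, sin (y / 2) ^ 2 = 1 / 2 - cos y / 2 := fun y => by
    rw [sin_sq, cos_sq, mul_div_cancel₀ y two_ne_zero]; ring
  simp only [sin_sq_half]
  exact ((hf.cos.div_const 2).const_sub (1 / 2)).congr_deriv (by ring)

theorem hasDerivAt_pllLyapunov_comp (β L ω : ℝ) {x θ : ℝ → ℝ} {x' θ' t : ℝ}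
    (hx : HasDerivAt x x' t) (hθ : HasDerivAt θ θ' t) :
    HasDerivAt (fun s => pllLyapunov β L ω (x s) (θ s))
      ((x t - ω / L) * x' + β / L * sin (θ t) * θ') t := by
  refine ((((hx.sub_const (ω / L)).pow 2).const_mul (1 / 2)).add
    ((hasDerivAt_sin_half_sq_comp hθ).const_mul (2 * β / L))).congr_deriv ?_
  push_cast
  ring

theorem pllLyapunov_nonneg {β L : ℝ} (hβL : 0 ≤ β / L) (ω x θ : ℝ) :
    0 ≤ pllLyapunov β L ω x θ := by
  have hβL' : 0 ≤ 2 * β / L := by rw [mul_div_assoc]; positivity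
  unfold pllLyapunov
  positivity

/-- Along any solution of `ẋ = β sin θ`, `θ̇ = ω − L x − L α sin θ`, the Lyapunov
function `V(x, θ) = (1/2)(x − ω/L)² + (2β/L) sin²(θ/2)` is differentiable with
derivative `−αβ sin²θ`; moreover `V ≥ 0` if `β/L ≥ 0`, and the derivative is
`≤ 0` if `αβ ≥ 0`. -/
theorem pll_lyapunov_derivative (α β L ω : ℝ) (hL : L ≠ 0) (x θ : ℝ → ℝ)
    (hx : ∀ t : ℝ, HasDerivAt x (β * Real.sin (θ t)) t)
    (hθ : ∀ t : ℝ, HasDerivAt θ (ω - L * x t - L * α * Real.sin (θ t)) t) :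
    (∀ t : ℝ, HasDerivAt (fun s => pllLyapunov β L ω (x s) (θ s))
        (-(α * β) * Real.sin (θ t) ^ 2) t) ∧
    (0 ≤ β / L → ∀ x' θ' : ℝ, 0 ≤ pllLyapunov β L ω x' θ') ∧
    (0 ≤ α * β → ∀ t : ℝ, -(α * β) * Real.sin (θ t) ^ 2 ≤ 0) := by
  refine ⟨fun t => ?_, fun hβL => pllLyapunov_nonneg hβL ω, fun hαβ t => ?_⟩
  · refine (hasDerivAt_pllLyapunov_comp β L ω (hx t) (hθ t)).congr_deriv ?_
    field_simp
    ring
  · exact mul_nonpos_of_nonpos_of_nonneg (neg_nonpos.mpr hαβ) (sq_nonneg _)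
end

section
/- Let α, β, L, ω ∈ ℝ with L ≠ 0. Suppose differentiable functions x, θ : ℝ → ℝ satisfy ẋ(t) = β·sin θ(t) and θ̇(t) = ω − L·x(t) − L·α·sin θ(t) for all t, and sin θ(t) = 0 for all t. Then θ is constant and x(t) = ω/L for all t; that is, the only whole trajectories contained in the set { (x, θ) : sin θ = 0 } are the equilibria. -/
/-!
Along such a trajectory `θ` is a continuous function of `t` with values in the discrete set
`πℤ`, so it is constant on the connected line. Then `θ̇ = 0`, and the second equation with
`sin θ = 0` reads `ω − L x = 0`.
-/

open Real Set

theorem Real.mem_zmultiples_pi_of_sin_eq_zero {x : ℝ} (h : sin x = 0) :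
    x ∈ AddSubgroup.zmultiples π := by
  obtain ⟨n, rfl⟩ := sin_eq_zero_iff.mp h
  exact ⟨n, zsmul_eq_mul _ _⟩

theorem PreconnectedSpace.eq_of_sin_comp_eq_zero {X : Type*} [TopologicalSpace X]
    [PreconnectedSpace X] {f : X → ℝ} (hf : Continuous f) (h : ∀ x, sin (f x) = 0) (x y : X) :
    f x = f y :=
  isPreconnected_univ.constant_of_mapsTo (T := (AddSubgroup.zmultiples π : Set ℝ))
    (SetLike.isDiscrete_iff_discreteTopology.mpr inferInstance) hf.continuousOn
    (fun t _ => Real.mem_zmultiples_pi_of_sin_eq_zero (h t)) trivial trivial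

theorem pll_invariant_zero_set_general (α L ω : ℝ) (hL : L ≠ 0) (x θ : ℝ → ℝ)
    (hθ : ∀ t : ℝ, HasDerivAt θ (ω - L * x t - L * α * Real.sin (θ t)) t)
    (hzero : ∀ t : ℝ, Real.sin (θ t) = 0) :
    (∀ t s : ℝ, θ t = θ s) ∧ (∀ t : ℝ, x t = ω / L) := by
  have hθ_const : ∀ t s, θ t = θ s :=
    PreconnectedSpace.eq_of_sin_comp_eq_zero
      (continuous_iff_continuousAt.mpr fun t => (hθ t).continuousAt) hzero
  refine ⟨hθ_const, fun t => ?_⟩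
  have hθ_eq : θ = fun _ => θ 0 := funext fun s => hθ_const s 0
  have hderiv : ω - L * x t - L * α * sin (θ t) = 0 :=
    (hθ t).unique (hθ_eq ▸ hasDerivAt_const t (θ 0))
  rw [hzero t, mul_zero, sub_zero, sub_eq_zero] at hderiv
  field_simp
  linarith

/-- For the classical PLL with filter `H(s) = (β + αs)/s`, i.e. the planar
system `ẋ = β sin θ`, `θ̇ = ω − L x − L α sin θ`, the only whole trajectories
contained in the set `{(x, θ) : sin θ = 0}` are the equilibria: such a
trajectory has `θ` constant and `x ≡ ω/L`. -/
theorem pll_invariant_zero_set (α β L ω : ℝ) (hL : L ≠ 0) (x θ : ℝ → ℝ)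
    (hx : ∀ t : ℝ, HasDerivAt x (β * Real.sin (θ t)) t)
    (hθ : ∀ t : ℝ, HasDerivAt θ (ω - L * x t - L * α * Real.sin (θ t)) t)
    (hzero : ∀ t : ℝ, Real.sin (θ t) = 0) :
    (∀ t s : ℝ, θ t = θ s) ∧ (∀ t : ℝ, x t = ω / L) :=
  pll_invariant_zero_set_general α L ω hL x θ hθ hzero
end

section
/- Let A be a real n×n matrix, c ∈ ℝⁿ, and v ∈ ℝⁿ a constant vector. Assume the pair (cᵀ, A) is observable, i.e. the only vector y ∈ ℝⁿ satisfying cᵀAⁱ y = 0 for all i = 0, 1, …, n−1 is y = 0. If a differentiable function x : ℝ → ℝⁿ satisfies ẋ(t) = A x(t) + v for all t and the scalar function t ↦ cᵀ x(t) is constant, then x is constant. -/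
open Matrix

/-- The linear map `y ↦ c ⬝ᵥ (M *ᵥ y)`. -/
noncomputable def dotMulCLM {n : ℕ} (c : Fin n → ℝ) (M : Matrix (Fin n) (Fin n) ℝ) :
    (Fin n → ℝ) →L[ℝ] ℝ :=
  LinearMap.toContinuousLinearMap
    { toFun := fun y => c ⬝ᵥ (M *ᵥ y)
      map_add' := by intro a b; simp [Matrix.mulVec_add, dotProduct_add]
      map_smul' := by intro r a; simp [Matrix.mulVec_smul, dotProduct_smul] }

@[simp] lemma dotMulCLM_apply {n : ℕ} (c : Fin n → ℝ) (M : Matrix (Fin n) (Fin n) ℝ)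
    (y : Fin n → ℝ) : dotMulCLM c M y = c ⬝ᵥ (M *ᵥ y) := rfl

/-- The linear map `y ↦ M *ᵥ y` as a continuous linear map. -/
noncomputable def mulVecCLM {n : ℕ} (M : Matrix (Fin n) (Fin n) ℝ) :
    (Fin n → ℝ) →L[ℝ] (Fin n → ℝ) :=
  LinearMap.toContinuousLinearMap M.mulVecLin

@[simp] lemma mulVecCLM_apply {n : ℕ} (M : Matrix (Fin n) (Fin n) ℝ)
    (y : Fin n → ℝ) : mulVecCLM M y = M *ᵥ y := rfl

/-- Observability lemma: if the pair `(cᵀ, A)` is observable, `x` solves the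
affine ODE `ẋ = A x + v`, and the output `t ↦ cᵀ x(t)` is constant, then `x`
is constant. -/
theorem observable_constant_output_implies_constant_state {n : ℕ}
    (A : Matrix (Fin n) (Fin n) ℝ) (c : Fin n → ℝ) (v : Fin n → ℝ)
    (hobs : ∀ y : Fin n → ℝ, (∀ i : ℕ, i < n → c ⬝ᵥ ((A ^ i) *ᵥ y) = 0) → y = 0)
    (x : ℝ → (Fin n → ℝ))
    (hx : ∀ t : ℝ, HasDerivAt x (A *ᵥ x t + v) t)
    (hout : ∀ t s : ℝ, c ⬝ᵥ x t = c ⬝ᵥ x s) :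
    ∀ t s : ℝ, x t = x s := by
  -- the derivative function
  set y : ℝ → (Fin n → ℝ) := fun t => A *ᵥ x t + v with hy
  -- y has derivative A *ᵥ y t
  have hy' : ∀ t : ℝ, HasDerivAt y (A *ᵥ y t) t := by
    intro t
    have h1 : HasDerivAt (fun t => mulVecCLM A (x t)) (mulVecCLM A (y t)) t :=
      ((mulVecCLM A).hasFDerivAt.comp_hasDerivAt t (hx t))
    simpa [hy] using h1.add_const v
  -- base case: c ⬝ᵥ y t = 0
  have hbase : ∀ t : ℝ, c ⬝ᵥ y t = 0 := by
    intro t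
    have h1 : HasDerivAt (fun t => (dotMulCLM c 1) (x t)) ((dotMulCLM c 1) (y t)) t :=
      ((dotMulCLM c 1).hasFDerivAt.comp_hasDerivAt t (hx t))
    have heq : (fun t => (dotMulCLM c 1) (x t)) = fun _ => c ⬝ᵥ x 0 := by
      funext s; simp [Matrix.one_mulVec, hout s 0]
    rw [heq] at h1
    have h2 := (hasDerivAt_const t (c ⬝ᵥ x 0)).unique h1
    simpa [Matrix.one_mulVec] using h2.symm
  -- induction: c ⬝ᵥ (A^i *ᵥ y t) = 0
  have hind : ∀ i : ℕ, ∀ t : ℝ, c ⬝ᵥ ((A ^ i) *ᵥ y t) = 0 := by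
    intro i
    induction i with
    | zero => intro t; simpa [Matrix.one_mulVec] using hbase t
    | succ k ih =>
      intro t
      have h1 : HasDerivAt (fun t => (dotMulCLM c (A ^ k)) (y t))
          ((dotMulCLM c (A ^ k)) (A *ᵥ y t)) t :=
        ((dotMulCLM c (A ^ k)).hasFDerivAt.comp_hasDerivAt t (hy' t))
      have heq : (fun t => (dotMulCLM c (A ^ k)) (y t)) = fun _ => (0 : ℝ) := by
        funext s; simpa using ih s
      rw [heq] at h1
      have h2 := (hasDerivAt_const t (0 : ℝ)).unique h1
      have : c ⬝ᵥ ((A ^ k) *ᵥ (A *ᵥ y t)) = 0 := by simpa using h2.symm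
      rw [pow_succ, ← Matrix.mulVec_mulVec]
      exact this
  -- observability: y t = 0
  have hyzero : ∀ t : ℝ, y t = 0 := fun t => hobs (y t) (fun i _ => hind i t)
  -- x has zero derivative, hence constant
  have hdiff : Differentiable ℝ x := fun t => (hx t).differentiableAt
  have hderiv : ∀ t : ℝ, deriv x t = 0 := by
    intro t
    have := (hx t).deriv
    rw [this]
    simpa [hy] using hyzero t
  intro t s
  exact is_const_of_deriv_eq_zero hdiff hderiv t s
end

section
/- Let A be a real n×n matrix, b, c ∈ ℝⁿ, h, L, ω ∈ ℝ with L ≠ 0, and φ : ℝ → ℝ. Assume the pair (cᵀ, A) is observable, i.e. cᵀAⁱ y = 0 for all i = 0, …, n−1 implies y = 0. If differentiable functions x : ℝ → ℝⁿ, θ : ℝ → ℝ satisfy ẋ(t) = A x(t) + b φ(θ(t)) and θ̇(t) = ω − L cᵀ x(t) − L h φ(θ(t)) for all t, and θ is constant (θ(t) ≡ θ₀), then x is constant (x(t) ≡ x₀) and (x₀, θ₀) is an equilibrium: A x₀ + b φ(θ₀) = 0 and ω − L cᵀ x₀ − L h φ(θ₀) = 0. -/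
/-!
Along a solution with `θ ≡ θ₀` the equation for `θ̇` forces `cᵀx(t)` to be constant (as `L ≠ 0`),
and the filter equation becomes `ẋ = A x + u` with the constant input `u = φ(θ₀) b`.
Differentiating `cᵀAⁱx(t)` gives `cᵀAⁱ⁺¹x(t) + cᵀAⁱu`, so inductively every output `cᵀAⁱx(t)`
is constant; observability then makes `x` itself constant, and a constant solution is an
equilibrium.
-/

open Matrix

theorem HasDerivAt.eq_zero_of_forall_eq {F : Type*} [NormedAddCommGroup F] [NormedSpace ℝ F]
    {f : ℝ → F} {f' a : F} {t : ℝ} (hf : HasDerivAt f f' t) (hconst : ∀ s, f s = a) :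
    f' = 0 := by
  rw [funext hconst] at hf
  exact hf.unique (hasDerivAt_const t a)

theorem HasDerivAt.const_dotProduct {ι : Type*} [Fintype ι] (w : ι → ℝ) {x : ℝ → ι → ℝ}
    {x' : ι → ℝ} {t : ℝ} (hx : HasDerivAt x x' t) :
    HasDerivAt (fun s => w ⬝ᵥ x s) (w ⬝ᵥ x') t :=
  HasDerivAt.fun_sum fun j _ => ((hasDerivAt_pi.mp hx) j).const_mul (w j)

section AffineSystem

variable {ι : Type*} [Fintype ι] [DecidableEq ι] {A : Matrix ι ι ℝ} {u : ι → ℝ}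
  {x : ℝ → ι → ℝ}

theorem hasDerivAt_dotProduct_pow_mulVec (hx : ∀ t, HasDerivAt x (A *ᵥ x t + u) t)
    (c : ι → ℝ) (i : ℕ) (t : ℝ) :
    HasDerivAt (fun s => c ⬝ᵥ (A ^ i *ᵥ x s))
      (c ⬝ᵥ (A ^ (i + 1) *ᵥ x t) + c ⬝ᵥ (A ^ i *ᵥ u)) t := by
  simp_rw [dotProduct_mulVec c (A ^ _)]
  convert (hx t).const_dotProduct (c ᵥ* A ^ i) using 1
  rw [dotProduct_add, pow_succ, ← vecMul_vecMul]
  simp only [dotProduct_mulVec]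

theorem dotProduct_pow_mulVec_eq_of_dotProduct_eq (hx : ∀ t, HasDerivAt x (A *ᵥ x t + u) t)
    {c : ι → ℝ} (hc : ∀ t, c ⬝ᵥ x t = c ⬝ᵥ x 0) (i : ℕ) (t : ℝ) :
    c ⬝ᵥ (A ^ i *ᵥ x t) = c ⬝ᵥ (A ^ i *ᵥ x 0) := by
  induction i generalizing t with
  | zero => simpa using hc t
  | succ i ih =>
    have hzero (s : ℝ) : c ⬝ᵥ (A ^ (i + 1) *ᵥ x s) + c ⬝ᵥ (A ^ i *ᵥ u) = 0 :=
      (hasDerivAt_dotProduct_pow_mulVec hx c i s).eq_zero_of_forall_eq ih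
    linear_combination hzero t - hzero 0

end AffineSystem

/-- For an observable loop filter, the locked states of the PLL model
`ẋ = A x + b φ(θ)`, `θ̇ = ω − L cᵀx − L h φ(θ)` are exactly the equilibria:
if the phase error `θ` is constant along a solution, then the filter state `x`
is also constant and the (constant) point is an equilibrium. -/
theorem pll_locked_state_is_equilibrium {n : ℕ}
    (A : Matrix (Fin n) (Fin n) ℝ) (b c : Fin n → ℝ) (h L ω : ℝ) (hL : L ≠ 0)
    (φ : ℝ → ℝ)
    (hobs : ∀ y : Fin n → ℝ, (∀ i : ℕ, i < n → c ⬝ᵥ ((A ^ i) *ᵥ y) = 0) → y = 0)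
    (x : ℝ → (Fin n → ℝ)) (θ : ℝ → ℝ) (θ₀ : ℝ)
    (hx : ∀ t : ℝ, HasDerivAt x (A *ᵥ x t + φ (θ t) • b) t)
    (hθ : ∀ t : ℝ, HasDerivAt θ (ω - L * (c ⬝ᵥ x t) - L * h * φ (θ t)) t)
    (hconst : ∀ t : ℝ, θ t = θ₀) :
    ∃ x₀ : Fin n → ℝ, (∀ t : ℝ, x t = x₀) ∧
      A *ᵥ x₀ + φ θ₀ • b = 0 ∧ ω - L * (c ⬝ᵥ x₀) - L * h * φ θ₀ = 0 := by
  simp only [hconst] at hx hθ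
  have hθ_eq (t : ℝ) : ω - L * (c ⬝ᵥ x t) - L * h * φ θ₀ = 0 :=
    (hθ t).eq_zero_of_forall_eq hconst
  have hcx (t : ℝ) : c ⬝ᵥ x t = c ⬝ᵥ x 0 :=
    mul_left_cancel₀ hL (by linear_combination hθ_eq 0 - hθ_eq t)
  have hx_eq (t : ℝ) : x t = x 0 := by
    refine sub_eq_zero.mp (hobs _ fun i _ => ?_)
    rw [mulVec_sub, dotProduct_sub, dotProduct_pow_mulVec_eq_of_dotProduct_eq hx hcx i t,
      sub_self]
  exact ⟨x 0, hx_eq, (hx 0).eq_zero_of_forall_eq hx_eq, hθ_eq 0⟩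
end

section
/- Let A be an invertible real n×n matrix, b, c ∈ ℝⁿ, h, L, ω ∈ ℝ with L ≠ 0 and H₀ := h − cᵀA⁻¹b ≠ 0, and let φ(θ) = (1/2)·sin θ. Then the PLL model has an equilibrium (a point (x₀, θ₀) with A x₀ + b φ(θ₀) = 0 and ω − L cᵀx₀ − L h φ(θ₀) = 0) if and only if |ω| ≤ |L·H₀|/2. -/
open Matrix

/-- For the classical PLL with sinusoidal phase-detector characteristic
`φ(θ) = (1/2)sin θ` and `H₀ = h − cᵀA⁻¹b ≠ 0`, the model
`ẋ = A x + b φ(θ)`, `θ̇ = ω − L cᵀx − L h φ(θ)` has an equilibrium iff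
`|ω| ≤ |L·H₀|/2`. -/
theorem pll_sin_equilibrium_exists_iff {n : ℕ}
    (A : Matrix (Fin n) (Fin n) ℝ) (hA : IsUnit A.det)
    (b c : Fin n → ℝ) (h L ω : ℝ) (hL : L ≠ 0)
    (hH : h - c ⬝ᵥ (A⁻¹ *ᵥ b) ≠ 0) :
    (∃ (x₀ : Fin n → ℝ) (θ₀ : ℝ),
        A *ᵥ x₀ + (1 / 2 * Real.sin θ₀) • b = 0 ∧
        ω - L * (c ⬝ᵥ x₀) - L * h * (1 / 2 * Real.sin θ₀) = 0) ↔
      |ω| ≤ |L * (h - c ⬝ᵥ (A⁻¹ *ᵥ b))| / 2 := by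
  set H : ℝ := h - c ⬝ᵥ (A⁻¹ *ᵥ b) with hHdef
  constructor
  · rintro ⟨x₀, θ₀, h1, h2⟩
    -- from h1 : A x₀ = -(φ) • b, so x₀ = -(φ) • A⁻¹ b
    have hx : x₀ = -((1 / 2 * Real.sin θ₀) • (A⁻¹ *ᵥ b)) := by
      have h1' : A *ᵥ x₀ = -((1 / 2 * Real.sin θ₀) • b) := by
        rw [eq_neg_iff_add_eq_zero]; exact h1
      have := congrArg (fun v => A⁻¹ *ᵥ v) h1'
      simpa [Matrix.mulVec_mulVec, Matrix.nonsing_inv_mul A hA,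
        Matrix.mulVec_neg, Matrix.mulVec_smul] using this
    have hcx : c ⬝ᵥ x₀ = -(1 / 2 * Real.sin θ₀) * (c ⬝ᵥ (A⁻¹ *ᵥ b)) := by
      rw [hx]; simp [dotProduct_smul, mul_comm]
    have hω : ω = L * H * (1 / 2 * Real.sin θ₀) := by
      have := h2
      rw [hcx] at this
      rw [hHdef]; nlinarith [this]
    rw [hω]
    have hs : |Real.sin θ₀| ≤ 1 := Real.abs_sin_le_one θ₀
    rw [abs_mul]
    calc |L * H| * |1 / 2 * Real.sin θ₀| ≤ |L * H| * (1/2) := by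
          apply mul_le_mul_of_nonneg_left _ (abs_nonneg _)
          rw [abs_mul]
          calc |(1:ℝ)/2| * |Real.sin θ₀| ≤ |(1:ℝ)/2| * 1 :=
                mul_le_mul_of_nonneg_left hs (abs_nonneg _)
            _ = 1/2 := by norm_num
      _ = |L * H| / 2 := by ring
  · intro hle
    have hLH : L * H ≠ 0 := mul_ne_zero hL hH
    set s : ℝ := 2 * ω / (L * H) with hs
    have hs1 : |s| ≤ 1 := by
      rw [hs, abs_div, div_le_one (abs_pos.mpr hLH)]
      rw [abs_mul]
      calc |(2:ℝ)| * |ω| ≤ 2 * (|L * H| / 2) := by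
            rw [abs_two]; exact mul_le_mul_of_nonneg_left hle (by norm_num)
        _ = |L * H| := by ring
    refine ⟨-((1 / 2 * s) • (A⁻¹ *ᵥ b)), Real.arcsin s, ?_, ?_⟩
    · have hsin : Real.sin (Real.arcsin s) = s :=
        Real.sin_arcsin (neg_le_of_abs_le hs1) (le_of_abs_le hs1)
      rw [hsin]
      rw [Matrix.mulVec_neg, Matrix.mulVec_smul, Matrix.mulVec_mulVec,
        Matrix.mul_nonsing_inv A hA]
      simp
    · have hsin : Real.sin (Real.arcsin s) = s :=
        Real.sin_arcsin (neg_le_of_abs_le hs1) (le_of_abs_le hs1)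
      rw [hsin]
      have hcx : c ⬝ᵥ (-((1 / 2 * s) • (A⁻¹ *ᵥ b))) = -(1 / 2 * s) * (c ⬝ᵥ (A⁻¹ *ᵥ b)) := by
        simp [dotProduct_smul, mul_comm]
      rw [hcx]
      have : L * H * s = 2 * ω := by
        rw [hs]; field_simp
      rw [hHdef] at this
      nlinarith [this]
end
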